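/- There exists S such that for all integers s ≥ S, setting n = 3s − 2, the vector (t₀*, …, t_{2n}*) defined by t_i* = 1 for 0 ≤ i ≤ 2s − 4, t_{2s−3}* = 3/4, t_{2s−2}* = 2/4, t_{2s−1}* = 1/4, and t_i* = 0 for i ≥ 2s, is an optimal solution of the cap set linear program: it is feasible, and every feasible vector (t₀, …, t_{2n}) satisfies 3·∑_{i=0}^{2n} f_{n,i}·t_i ≥ 3·∑_{i=0}^{2n} f_{n,i}·t_i*. -/

import Mathlib

/-- `f_{n,i}`: the coefficient of `x^i` in `(1 + x + x²)^n`. -/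
noncomputable def coeff3 (n i : ℕ) : ℕ :=
  (((1 + Polynomial.X + Polynomial.X ^ 2 : Polynomial ℕ)) ^ n).coeff i

/-- A vector `(t₀, …, t_{2n})` (given as a function on `ℕ`) is feasible for the
cap set linear program if all its entries are nonnegative and
`t_i + t_j + t_k ≥ 1` whenever `i + j + k ≤ 2n`. -/
def LPFeasible (n : ℕ) (t : ℕ → ℝ) : Prop :=
  (∀ i, i ≤ 2 * n → 0 ≤ t i) ∧
  (∀ i j k : ℕ, i + j + k ≤ 2 * n → 1 ≤ t i + t j + t k)

/-- The objective value `3 ∑_{i=0}^{2n} f_{n,i} t_i` of the cap set linear program. -/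
noncomputable def LPObj (n : ℕ) (t : ℕ → ℝ) : ℝ :=
  3 * ∑ i ∈ Finset.range (2 * n + 1), (coeff3 n i : ℝ) * t i

/-!
Weak duality. Put `p = 2s - 4`, so that `2n = 3p + 8`. The constraints `(i, p+4, 2p+4-i)` for
`i < p`, with weights `f_i`, and `(p, p+4, p+4)`, `(p+1, p+3, p+4)`, `(p+2, p+2, p+4)`,
`(p+2, p+3, p+3)`, with weights `f_p`, `f_{p+1}`, `(2f_{p+2} + f_{p+1} - f_{p+3})/4`,
`(f_{p+3} - f_{p+1})/2`, have total weight `∑ f_i t*_i` and put a load of at most `f_j` on every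
`t_j`. At `t_{2p+4-i}` this is symmetry and unimodality of the trinomial coefficients. At
`t_{p+4}` it needs geometric growth `f_{i+1} ≥ 8/5 f_i` for `i < 2s`, which follows from the
recurrence read off `P (Pⁿ)' = n P' Pⁿ`, `P = 1 + x + x²`, by alternating a lower bound on
`f_{k+1}/f_k` with an upper bound on `f_{k+2}/f_{k+1}`.
-/

open Polynomial Finset

lemma coeff3_succ_zero (n : ℕ) : coeff3 (n + 1) 0 = coeff3 n 0 := by
  simp [coeff3, pow_succ', add_mul]

lemma coeff3_succ_one (n : ℕ) : coeff3 (n + 1) 1 = coeff3 n 1 + coeff3 n 0 := by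
  simp [coeff3, pow_succ', add_mul, coeff_X_mul, mul_assoc]

lemma coeff3_succ_add_two (n i : ℕ) :
    coeff3 (n + 1) (i + 2) = coeff3 n (i + 2) + coeff3 n (i + 1) + coeff3 n i := by
  simp [coeff3, pow_succ', add_mul, coeff_X_mul, mul_assoc]

lemma coeff3_zero_right (n : ℕ) : coeff3 n 0 = 1 := by
  induction n with
  | zero => simp [coeff3]
  | succ n ih => rw [coeff3_succ_zero, ih]

lemma coeff3_one_right (n : ℕ) : coeff3 n 1 = n := by
  induction n with
  | zero => simp [coeff3, coeff_one]
  | succ n ih => rw [coeff3_succ_one, ih, coeff3_zero_right]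

lemma coeff3_symm {n i : ℕ} (h : i ≤ 2 * n) : coeff3 n i = coeff3 n (2 * n - i) := by
  have hdeg : (1 + X + X ^ 2 : ℕ[X]).natDegree ≤ 2 := by compute_degree
  have hrefl : reflect 2 (1 + X + X ^ 2 : ℕ[X]) = 1 + X + X ^ 2 := by
    rw [reflect_add, reflect_add, reflect_one, reflect_monomial, ← pow_one (X : ℕ[X]),
      reflect_monomial, revAt_le (by norm_num), revAt_le (by norm_num)]
    ring
  have hpow : ∀ n, reflect (2 * n) ((1 + X + X ^ 2 : ℕ[X]) ^ n) = (1 + X + X ^ 2) ^ n := by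
    intro n
    induction n with
    | zero => simp
    | succ n ih =>
      rw [mul_add_one, add_comm, pow_succ', reflect_mul _ _ hdeg
        (natDegree_pow_le_of_le n hdeg |>.trans_eq (mul_comm _ _)), hrefl, ih]
  unfold coeff3
  conv_lhs => rw [← hpow n, coeff_reflect, revAt_le h]

lemma coeff3_monotoneOn (n : ℕ) : MonotoneOn (coeff3 n) (Set.Iic n) := by
  induction n with
  | zero =>
    intro a ha b hb _
    rw [Set.mem_Iic, Nat.le_zero] at ha hb
    rw [ha, hb]
  | succ n ih =>
    refine monotoneOn_of_le_add_one Set.ordConnected_Iic fun i _ _ hi => ?_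
    rw [Set.mem_Iic] at hi
    match i with
    | 0 => simp [coeff3_zero_right, coeff3_one_right]
    | 1 => simp [coeff3_succ_one, coeff3_succ_add_two]
    | j + 2 =>
      have key : coeff3 n j ≤ coeff3 n (j + 3) := by
        rcases le_or_gt (j + 3) n with h | h
        · exact ih (by simp; omega) (by simpa) (by omega)
        · rw [coeff3_symm (show j + 3 ≤ 2 * n by omega)]
          exact ih (by simp; omega) (by simp; omega) (by omega)
      rw [coeff3_succ_add_two, show j + 2 + 1 = j + 1 + 2 from rfl, coeff3_succ_add_two]
      simp only [show j + 1 + 2 = j + 3 from rfl, show j + 1 + 1 = j + 2 from rfl]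
      omega

lemma coeff3_recurrence (n j : ℕ) :
    (j + 2) * coeff3 n (j + 2) + (j + 1) * coeff3 n (j + 1) + j * coeff3 n j
      = n * coeff3 n (j + 1) + 2 * n * coeff3 n j := by
  have hderiv : (1 + X + X ^ 2) * derivative ((1 + X + X ^ 2 : ℕ[X]) ^ n)
      = C n * ((1 + C 2 * X) * (1 + X + X ^ 2) ^ n) := by
    cases n with
    | zero => simp
    | succ m =>
      simp only [derivative_pow_succ, derivative_add, derivative_one, derivative_X, Nat.cast_id,
        eq_natCast, Nat.cast_add, Nat.cast_one, Nat.cast_ofNat, zero_add, pow_one]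
      ring
  have hc := congrArg (coeff · (j + 1)) hderiv
  cases j <;>
    simp only [coeff3, add_mul, mul_add, mul_assoc, one_mul, mul_one, zero_mul, zero_add, add_zero,
      coeff_add, coeff_derivative, coeff_X_mul, coeff_X_pow_mul', coeff_natCast_mul,
      coeff_ofNat_mul, Nat.cast_id, Nat.cast_one, Nat.cast_add, Nat.cast_ofNat, CharP.cast_eq_zero,
      eq_natCast, Nat.reduceAdd, Nat.reduceSubDiff, Nat.not_ofNat_le_one, le_add_iff_nonneg_left,
      zero_le, ↓reduceIte] at hc ⊢ <;>
    linarith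

lemma coeff3_recurrence_real (n j : ℕ) :
    ((j : ℝ) + 2) * coeff3 n (j + 2) + ((j : ℝ) + 1) * coeff3 n (j + 1) + j * coeff3 n j
      = n * coeff3 n (j + 1) + 2 * n * coeff3 n j := by
  exact_mod_cast coeff3_recurrence n j

lemma coeff3_upper_of_ratio {n k : ℕ} (hk : k ≤ 2 * n)
    (h : 8 * (coeff3 n k : ℝ) ≤ 5 * coeff3 n (k + 1)) :
    8 * ((k : ℝ) + 2) * coeff3 n (k + 2) ≤ (18 * n - 13 * k - 8) * coeff3 n (k + 1) := by
  have hk' : (k : ℝ) ≤ 2 * n := by exact_mod_cast hk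
  nlinarith [coeff3_recurrence_real n k, mul_le_mul_of_nonneg_left h (sub_nonneg.2 hk')]

lemma cast_three_mul_sub_two {s : ℕ} (hs : 1 ≤ s) : ((3 * s - 2 : ℕ) : ℝ) = 3 * s - 2 := by
  push_cast [Nat.cast_sub (by omega : 2 ≤ 3 * s)]
  ring

lemma coeff3_ratio_step {s k : ℕ} (hs : 34 ≤ s) (hk : k ≤ 2 * s - 3)
    (h : 8 * (coeff3 (3 * s - 2) k : ℝ) ≤ 5 * coeff3 (3 * s - 2) (k + 1)) :
    8 * (coeff3 (3 * s - 2) (k + 2) : ℝ) ≤ 5 * coeff3 (3 * s - 2) (k + 3) := by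
  set n := 3 * s - 2
  have hupper := coeff3_upper_of_ratio (by omega) h
  have hrec := coeff3_recurrence_real n (k + 1)
  rw [cast_three_mul_sub_two (by omega)] at hupper hrec
  have hs' : (34 : ℝ) ≤ s := by exact_mod_cast hs
  have hk' : (k : ℝ) + 3 ≤ 2 * s := by exact_mod_cast (by omega : k + 3 ≤ 2 * s)
  push_cast at hrec
  set D : ℝ := 18 * (3 * s - 2) - 13 * k - 8
  set a := (coeff3 n (k + 1) : ℝ)
  set b := (coeff3 n (k + 2) : ℝ)
  set c := (coeff3 n (k + 3) : ℝ)
  have hb : 0 ≤ b := Nat.cast_nonneg _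
  have hD : 0 < D := by linarith
  -- The difference of the two sides is `(2s - k - 3)(399s - 129k - 477) + 12s² - 405s + 105`,
  -- and the last quadratic is what forces `s ≥ 34`.
  have hquad :
      8 * (k + 3) * D ≤ 5 * (D * (3 * s - k - 4) + 8 * (k + 2) * (6 * s - k - 5)) := by
    nlinarith
  have hrec' : (k + 3) * c = (3 * s - k - 4) * b + (6 * s - k - 5) * a := by linarith
  have h1 := mul_le_mul_of_nonneg_left hupper (by linarith : (0 : ℝ) ≤ 6 * s - k - 5)
  have h2 := mul_le_mul_of_nonneg_right hquad hb
  refine le_of_mul_le_mul_left ?_ (by positivity : 0 < ((k : ℝ) + 3) * D)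
  linear_combination h2 + 5 * h1 - 5 * D * hrec'

lemma coeff3_ratio {s : ℕ} (hs : 34 ≤ s) :
    ∀ i ≤ 2 * s - 1, 8 * (coeff3 (3 * s - 2) i : ℝ) ≤ 5 * coeff3 (3 * s - 2) (i + 1)
  | 0, _ => by
    rw [coeff3_zero_right, coeff3_one_right, cast_three_mul_sub_two (by omega)]
    have hs' : (34 : ℝ) ≤ s := by exact_mod_cast hs
    push_cast
    linarith
  | 1, _ => by
    have hrec := coeff3_recurrence_real (3 * s - 2) 0
    rw [coeff3_zero_right, coeff3_one_right, cast_three_mul_sub_two (by omega)] at hrec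
    rw [coeff3_one_right, cast_three_mul_sub_two (by omega)]
    have hs' : (34 : ℝ) ≤ s := by exact_mod_cast hs
    push_cast at hrec
    nlinarith
  | k + 2, hk => coeff3_ratio_step hs (by omega) (coeff3_ratio hs k (by omega))

lemma sum_range_le_of_le_mul_succ {a : ℕ → ℝ} {r : ℝ} {m : ℕ} (hr0 : 0 ≤ r) (hr1 : r < 1)
    (ha : 0 ≤ a 0) (h : ∀ i < m, a i ≤ r * a (i + 1)) :
    ∑ i ∈ range m, a i ≤ r / (1 - r) * a m := by
  induction m with
  | zero => simpa using mul_nonneg (div_nonneg hr0 (sub_nonneg.2 hr1.le)) ha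
  | succ m ih =>
    have h1 : 0 < 1 - r := sub_pos.2 hr1
    rw [sum_range_succ]
    calc ∑ i ∈ range m, a i + a m ≤ r / (1 - r) * a m + a m :=
          add_le_add_left (ih fun i hi => h i (by omega)) _
      _ = 1 / (1 - r) * a m := by field_simp; ring
      _ ≤ 1 / (1 - r) * (r * a (m + 1)) :=
          mul_le_mul_of_nonneg_left (h m (by omega)) (by positivity)
      _ = r / (1 - r) * a (m + 1) := by ring

noncomputable def stepVector (p i : ℕ) : ℝ :=
  if i ≤ p then 1 else if i = p + 1 then 3 / 4 else if i = p + 2 then 2 / 4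
  else if i = p + 3 then 1 / 4 else 0

lemma stepVector_nonneg (p i : ℕ) : 0 ≤ stepVector p i := by
  unfold stepVector
  split_ifs <;> norm_num

lemma stepVector_of_le {p i : ℕ} (h : i ≤ p) : stepVector p i = 1 := if_pos h

lemma stepVector_of_add_four_le {p i : ℕ} (h : p + 4 ≤ i) : stepVector p i = 0 := by
  unfold stepVector
  rw [if_neg, if_neg, if_neg, if_neg] <;> omega

lemma ramp_le_stepVector {p i : ℕ} (h : p < i) : ((p : ℝ) + 4 - i) / 4 ≤ stepVector p i := by
  unfold stepVector
  rw [if_neg h.not_ge]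
  split_ifs with h1 h2 h3 <;> try (subst_vars; push_cast; linarith)
  have : (p : ℝ) + 4 ≤ i := by exact_mod_cast (by omega : p + 4 ≤ i)
  linarith

lemma stepVector_feasible {n p : ℕ} (h : 2 * n ≤ 3 * p + 8) : LPFeasible n (stepVector p) := by
  refine ⟨fun i _ => stepVector_nonneg p i, fun i j k hijk => ?_⟩
  have hi := stepVector_nonneg p i
  have hj := stepVector_nonneg p j
  have hk := stepVector_nonneg p k
  by_cases hip : i ≤ p
  · linarith [stepVector_of_le hip]
  by_cases hjp : j ≤ p
  · linarith [stepVector_of_le hjp]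
  by_cases hkp : k ≤ p
  · linarith [stepVector_of_le hkp]
  have hsum : (i : ℝ) + j + k ≤ 3 * p + 8 := by
    exact_mod_cast (by omega : i + j + k ≤ 3 * p + 8)
  linarith [ramp_le_stepVector (not_le.1 hip), ramp_le_stepVector (not_le.1 hjp),
    ramp_le_stepVector (not_le.1 hkp)]

lemma sum_range_mul_stepVector (F : ℕ → ℝ) {p N : ℕ} (hN : p + 4 ≤ N) :
    ∑ i ∈ range N, F i * stepVector p i
      = ∑ i ∈ range p, F i + F p + 3 / 4 * F (p + 1) + 2 / 4 * F (p + 2)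
        + 1 / 4 * F (p + 3) := by
  obtain ⟨m, rfl⟩ := Nat.exists_eq_add_of_le hN
  have htail : ∑ i ∈ range m, F (p + 4 + i) * stepVector p (p + 4 + i) = 0 :=
    sum_eq_zero fun i _ => by rw [stepVector_of_add_four_le (by omega), mul_zero]
  have hhead : ∑ i ∈ range p, F i * stepVector p i = ∑ i ∈ range p, F i :=
    sum_congr rfl fun i hi => by rw [stepVector_of_le (mem_range.1 hi).le, mul_one]
  simp only [sum_range_add, htail, add_zero, sum_range_succ, hhead]
  simp only [stepVector, le_refl, ↓reduceIte, add_le_iff_nonpos_right, nonpos_iff_eq_zero,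
    one_ne_zero, OfNat.ofNat_ne_zero, OfNat.ofNat_ne_one, Nat.add_left_cancel_iff, Nat.succ_ne_self]
  ring

lemma sum_range_mirror (g : ℕ → ℝ) (p : ℕ) :
    ∑ i ∈ range (2 * p + 5), g i
      = ∑ i ∈ range p, g i + g p + g (p + 1) + g (p + 2) + g (p + 3) + g (p + 4)
        + ∑ i ∈ range p, g (2 * p + 4 - i) := by
  have hrefl : ∑ i ∈ range p, g (2 * p + 4 - i) = ∑ i ∈ range p, g (p + 5 + i) := by
    rw [← sum_range_reflect]
    exact sum_congr rfl fun i hi => by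
      congr 1; have := mem_range.1 hi; omega
  rw [hrefl, show 2 * p + 5 = p + 5 + p by ring, sum_range_add]
  simp only [sum_range_succ]

lemma sum_mul_stepVector_le {F t : ℕ → ℝ} {p : ℕ} (hF : ∀ i, 0 ≤ F i)
    (hmirror : ∀ i < p, F i ≤ F (2 * p + 4 - i)) (hmono : F (p + 1) ≤ F (p + 3))
    (hslope : F (p + 3) ≤ 2 * F (p + 2) + F (p + 1))
    (hcap : 8 * F p + 5 * F (p + 1) + 2 * F (p + 2) - F (p + 3) + 4 * ∑ i ∈ range p, F i
      ≤ 4 * F (p + 4))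
    (ht0 : ∀ i ≤ 2 * p + 4, 0 ≤ t i)
    (ht : ∀ i j k, i + j + k ≤ 3 * p + 8 → 1 ≤ t i + t j + t k) :
    ∑ i ∈ range (2 * p + 5), F i * stepVector p i
      ≤ ∑ i ∈ range (2 * p + 5), F i * t i := by
  rw [sum_range_mul_stepVector F (by omega), sum_range_mirror]
  have hpairs : ∑ i ∈ range p, F i
      ≤ ∑ i ∈ range p, F i * t i + (∑ i ∈ range p, F i) * t (p + 4)
        + ∑ i ∈ range p, F (2 * p + 4 - i) * t (2 * p + 4 - i) := by
    rw [sum_mul, ← sum_add_distrib, ← sum_add_distrib]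
    refine sum_le_sum fun i hi => ?_
    have hip := mem_range.1 hi
    have h1 := mul_le_mul_of_nonneg_left (ht i (p + 4) (2 * p + 4 - i) (by omega)) (hF i)
    have h2 := mul_le_mul_of_nonneg_right (hmirror i hip) (ht0 (2 * p + 4 - i) (by omega))
    linarith
  have htop : F p + 3 / 4 * F (p + 1) + 2 / 4 * F (p + 2) + 1 / 4 * F (p + 3)
      ≤ F p * t p + F (p + 1) * t (p + 1) + F (p + 2) * t (p + 2) + F (p + 3) * t (p + 3)
        + (2 * F p + F (p + 1) + (2 * F (p + 2) + F (p + 1) - F (p + 3)) / 4) * t (p + 4) := by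
    have h1 := mul_le_mul_of_nonneg_left (ht p (p + 4) (p + 4) (by omega)) (hF p)
    have h2 := mul_le_mul_of_nonneg_left (ht (p + 1) (p + 3) (p + 4) (by omega)) (hF (p + 1))
    have h3 := mul_le_mul_of_nonneg_left (ht (p + 2) (p + 2) (p + 4) (by omega))
      (by linarith : 0 ≤ (2 * F (p + 2) + F (p + 1) - F (p + 3)) / 4)
    have h4 := mul_le_mul_of_nonneg_left (ht (p + 2) (p + 3) (p + 3) (by omega))
      (by linarith : 0 ≤ (F (p + 3) - F (p + 1)) / 2)
    linear_combination h1 + h2 + h3 + h4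
  have hload := mul_le_mul_of_nonneg_right hcap (ht0 (p + 4) (by omega))
  linear_combination hpairs + htop + hload / 4

lemma coeff3_le_of_le_of_add_le {n i j : ℕ} (hij : i ≤ j) (hj : i + j ≤ 2 * n) :
    coeff3 n i ≤ coeff3 n j := by
  rcases le_or_gt j n with hjn | hjn
  · exact coeff3_monotoneOn n (by simp; omega) (by simpa) hij
  · rw [coeff3_symm (by omega : j ≤ 2 * n)]
    exact coeff3_monotoneOn n (by simp; omega) (by simp; omega) (by omega)

lemma LPObj_stepVector_le {n p : ℕ} (hnp : 3 * p + 8 ≤ 2 * n)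
    (hslope : (coeff3 n (p + 3) : ℝ) ≤ 2 * coeff3 n (p + 2) + coeff3 n (p + 1))
    (hcap : 8 * (coeff3 n p : ℝ) + 5 * coeff3 n (p + 1) + 2 * coeff3 n (p + 2)
      - coeff3 n (p + 3) + 4 * ∑ i ∈ range p, (coeff3 n i : ℝ) ≤ 4 * coeff3 n (p + 4))
    {t : ℕ → ℝ} (ht : LPFeasible n t) : LPObj n (stepVector p) ≤ LPObj n t := by
  obtain ⟨ht0, ht⟩ := ht
  have hF : ∀ i, 0 ≤ (coeff3 n i : ℝ) := fun i => Nat.cast_nonneg _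
  have hle : ∀ {i j}, i ≤ j → i + j ≤ 2 * n → (coeff3 n i : ℝ) ≤ coeff3 n j :=
    fun hij hj => Nat.cast_le.2 (coeff3_le_of_le_of_add_le hij hj)
  unfold LPObj
  gcongr 3 * ?_
  calc ∑ i ∈ range (2 * n + 1), (coeff3 n i : ℝ) * stepVector p i
      = ∑ i ∈ range (2 * p + 5), (coeff3 n i : ℝ) * stepVector p i := by
        rw [sum_range_mul_stepVector _ (by omega), sum_range_mul_stepVector _ (by omega)]
    _ ≤ ∑ i ∈ range (2 * p + 5), (coeff3 n i : ℝ) * t i :=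
        sum_mul_stepVector_le hF (fun i hi => hle (by omega) (by omega))
          (hle (by omega) (by omega)) hslope hcap (fun i hi => ht0 i (by omega))
          (fun i j k h => ht i j k (by omega))
    _ ≤ ∑ i ∈ range (2 * n + 1), (coeff3 n i : ℝ) * t i :=
        sum_le_sum_of_subset_of_nonneg (range_subset_range.2 (by omega)) fun i hi _ =>
          mul_nonneg (hF i) (ht0 i (by have := mem_range.1 hi; omega))

lemma coeff3_slope {s p : ℕ} (hs : 34 ≤ s) (hp : 2 * s = p + 4) :
    (coeff3 (3 * s - 2) (p + 3) : ℝ)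
      ≤ 2 * coeff3 (3 * s - 2) (p + 2) + coeff3 (3 * s - 2) (p + 1) := by
  have h := coeff3_upper_of_ratio (k := p + 1) (by omega) (coeff3_ratio hs (p + 1) (by omega))
  simp only [add_assoc, Nat.reduceAdd] at h
  rw [cast_three_mul_sub_two (by omega)] at h
  have hp' : (p : ℝ) + 4 = 2 * s := by exact_mod_cast hp.symm
  have hs' : (34 : ℝ) ≤ s := by exact_mod_cast hs
  have h1 : (0 : ℝ) ≤ coeff3 (3 * s - 2) (p + 1) := Nat.cast_nonneg _
  have h2 : (0 : ℝ) ≤ coeff3 (3 * s - 2) (p + 2) := Nat.cast_nonneg _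
  push_cast at h
  nlinarith

lemma coeff3_capacity {s p : ℕ} (hs : 34 ≤ s) (hp : 2 * s = p + 4) :
    8 * (coeff3 (3 * s - 2) p : ℝ) + 5 * coeff3 (3 * s - 2) (p + 1)
      + 2 * coeff3 (3 * s - 2) (p + 2) - coeff3 (3 * s - 2) (p + 3)
      + 4 * ∑ i ∈ range p, (coeff3 (3 * s - 2) i : ℝ)
      ≤ 4 * coeff3 (3 * s - 2) (p + 4) := by
  have hr : ∀ i ≤ p + 3, 8 * (coeff3 (3 * s - 2) i : ℝ) ≤ 5 * coeff3 (3 * s - 2) (i + 1) :=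
    fun i hi => coeff3_ratio hs i (by omega)
  have hsum := sum_range_le_of_le_mul_succ (a := fun i => (coeff3 (3 * s - 2) i : ℝ)) (m := p)
    (r := 5 / 8) (by norm_num) (by norm_num) (Nat.cast_nonneg _)
    fun i hi => by linarith [hr i (by omega)]
  have r0 := hr p (by omega)
  have r1 := hr (p + 1) (by omega)
  have r2 := hr (p + 2) (by omega)
  have r3 := hr (p + 3) le_rfl
  simp only [add_assoc, Nat.reduceAdd] at r1 r2 r3
  rw [show (5 : ℝ) / 8 / (1 - 5 / 8) = 5 / 3 by norm_num] at hsum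
  linarith

lemma stepVector_two_mul_sub_four {s : ℕ} (hs : 2 ≤ s) :
    (fun i => if i ≤ 2 * s - 4 then (1 : ℝ)
      else if i = 2 * s - 3 then 3 / 4 else if i = 2 * s - 2 then 2 / 4
      else if i = 2 * s - 1 then 1 / 4 else 0) = stepVector (2 * s - 4) := by
  funext i
  simp only [stepVector, show 2 * s - 3 = 2 * s - 4 + 1 by omega,
    show 2 * s - 2 = 2 * s - 4 + 2 by omega, show 2 * s - 1 = 2 * s - 4 + 3 by omega]

/-- For `n = 3s - 2` with `s` large, the vector with `tᵢ = 1` for `i ≤ 2s-4`,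
`t_{2s-3} = 3/4`, `t_{2s-2} = 2/4`, `t_{2s-1} = 1/4` and `tᵢ = 0` for `i ≥ 2s`
is an optimal solution of the cap set linear program. -/
theorem lp_optimal_three_s_sub_two :
    ∃ S : ℕ, ∀ s : ℕ, S ≤ s →
      LPFeasible (3 * s - 2) (fun i => if i ≤ 2 * s - 4 then 1
        else if i = 2 * s - 3 then 3 / 4 else if i = 2 * s - 2 then 2 / 4
        else if i = 2 * s - 1 then 1 / 4 else 0) ∧
      ∀ t : ℕ → ℝ, LPFeasible (3 * s - 2) t →
        LPObj (3 * s - 2) (fun i => if i ≤ 2 * s - 4 then 1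
          else if i = 2 * s - 3 then 3 / 4 else if i = 2 * s - 2 then 2 / 4
          else if i = 2 * s - 1 then 1 / 4 else 0) ≤
        LPObj (3 * s - 2) t := by
  refine ⟨34, fun s hs => ?_⟩
  have hp : 2 * s = 2 * s - 4 + 4 := by omega
  rw [stepVector_two_mul_sub_four (by omega)]
  exact ⟨stepVector_feasible (by omega), fun t ht =>
    LPObj_stepVector_le (by omega) (coeff3_slope hs hp) (coeff3_capacity hs hp) ht⟩
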